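/- For a ∈ ℂ define f_a(z) = (e^z/(1+z)) · exp(−a · Log(e^{2z}(1−z)/(1+z))) for |z| < 1/2, where Log is the principal branch of the complex logarithm (which is well defined here since e^{2z}(1−z)/(1+z) avoids the ray (−∞,0] for |z| < 1/2). Let A_m(a) = (1/m!) · (d/dz)^m f_a(z)|_{z=0} denote its Taylor coefficients at 0. Then there exist C > 0 and a₀ > 0 such that for every a ∈ ℂ with Re a ≤ −a₀ and |Im a| ≤ 1, and every m ∈ ℤ_{≥0}, one has |A_m(a)| ≤ C |a|^{(5/12) m}. -/

import Mathlib

/-!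
The exponent `2z + log (1 - z) - log (1 + z)` is a branch of `log (e^{2z} (1 - z) / (1 + z))`
whose Taylor series starts at `z³` (the linear and quadratic terms cancel), so for `‖z‖ ≤ R`
the factor `(e^{2z} (1 - z) / (1 + z))^{-a}` has norm at most `exp (2 ‖a‖ R³)`. On the circle of
radius `R = ‖a‖^{-5/12}` this is `exp (2 ‖a‖^{-1/4}) ≤ e²`, uniformly in `a`, and Cauchy's
estimate on that circle gives `‖A_m(a)‖ ≤ C R^{-m} = C ‖a‖^{5m/12}`.
-/

open MeasureTheory Set

/-- The generating function `f_a(z) = (e^z/(1+z)) · (e^{2z}(1-z)/(1+z))^{-a}` of the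
coefficients in Tricomi's Bessel expansion of the confluent hypergeometric function,
with the power defined via the principal branch of the logarithm. -/
noncomputable def tricomiGen (a z : ℂ) : ℂ :=
  (Complex.exp z / (1 + z)) *
    Complex.exp (-a * Complex.log (Complex.exp (2 * z) * (1 - z) / (1 + z)))

/-- The Taylor coefficient `A_m(a)` of `f_a` at `z = 0`. -/
noncomputable def tricomiCoeff (m : ℕ) (a : ℂ) : ℂ :=
  iteratedDeriv m (tricomiGen a) 0 / (Nat.factorial m : ℂ)

open Complex

lemma Complex.norm_log_one_add_sub_le_of_norm_le_half {z : ℂ} (hz : ‖z‖ ≤ 1 / 2) :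
    ‖log (1 + z) - (z - z ^ 2 / 2)‖ ≤ 2 / 3 * ‖z‖ ^ 3 := by
  have hz1 : ‖z‖ < 1 := hz.trans_lt one_half_lt_one
  have htaylor : logTaylor 3 z = z - z ^ 2 / 2 := by
    simp only [logTaylor_succ, logTaylor_zero, Pi.add_apply]
    push_cast
    ring
  have hinv : (1 - ‖z‖)⁻¹ ≤ 2 := by
    rw [inv_le_comm₀ (by linarith) two_pos]
    linarith
  calc ‖log (1 + z) - (z - z ^ 2 / 2)‖ ≤ ‖z‖ ^ 3 * (1 - ‖z‖)⁻¹ / 3 := by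
        simpa [htaylor, (by norm_num : (2 : ℝ) + 1 = 3)] using norm_log_sub_logTaylor_le 2 hz1
    _ ≤ ‖z‖ ^ 3 * 2 / 3 := by gcongr
    _ = 2 / 3 * ‖z‖ ^ 3 := by ring

lemma Complex.one_sub_mem_slitPlane_of_norm_lt_one {z : ℂ} (hz : ‖z‖ < 1) : 1 - z ∈ slitPlane := by
  simpa [sub_eq_add_neg] using mem_slitPlane_of_norm_lt_one (norm_neg z ▸ hz)

/-- The branch of `log (e^{2z} (1 - z) / (1 + z))` on the unit disc that vanishes at `0`. -/
noncomputable def tricomiLog (z : ℂ) : ℂ :=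
  2 * z + log (1 - z) - log (1 + z)

lemma norm_tricomiLog_le {z : ℂ} (hz : ‖z‖ ≤ 1 / 2) : ‖tricomiLog z‖ ≤ 2 * ‖z‖ ^ 3 := by
  have hplus := norm_log_one_add_sub_le_of_norm_le_half hz
  have hminus := norm_log_one_add_sub_le_of_norm_le_half (z := -z) (by rwa [norm_neg])
  rw [norm_neg] at hminus
  have hsplit : tricomiLog z =
      (log (1 + -z) - (-z - (-z) ^ 2 / 2)) - (log (1 + z) - (z - z ^ 2 / 2)) := by
    rw [tricomiLog, ← sub_eq_add_neg]; ring
  calc ‖tricomiLog z‖ ≤ 2 / 3 * ‖z‖ ^ 3 + 2 / 3 * ‖z‖ ^ 3 := by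
        rw [hsplit]; exact norm_sub_le_of_le hminus hplus
    _ ≤ 2 * ‖z‖ ^ 3 := by linarith [pow_nonneg (norm_nonneg z) 3]

lemma exp_tricomiLog {z : ℂ} (hz : ‖z‖ < 1) :
    exp (tricomiLog z) = exp (2 * z) * (1 - z) / (1 + z) := by
  rw [tricomiLog, exp_sub, exp_add,
    exp_log (slitPlane_ne_zero (one_sub_mem_slitPlane_of_norm_lt_one hz)),
    exp_log (slitPlane_ne_zero (mem_slitPlane_of_norm_lt_one hz))]

lemma log_exp_mul_div_eq_tricomiLog {z : ℂ} (hz : ‖z‖ ≤ 1 / 2) :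
    log (exp (2 * z) * (1 - z) / (1 + z)) = tricomiLog z := by
  have him : |(tricomiLog z).im| < Real.pi := by
    have hcube : 2 * ‖z‖ ^ 3 ≤ 2 * (1 / 2) ^ 3 := by gcongr
    linarith [abs_im_le_norm (tricomiLog z), norm_tricomiLog_le hz, Real.pi_gt_three]
  rw [← exp_tricomiLog (hz.trans_lt one_half_lt_one)]
  exact log_exp (by linarith [neg_abs_le (tricomiLog z).im]) (le_abs_self _ |>.trans him.le)

lemma tricomiGen_eq {a z : ℂ} (hz : ‖z‖ ≤ 1 / 2) :
    tricomiGen a z = exp z / (1 + z) * exp (-a * tricomiLog z) := by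
  rw [tricomiGen, log_exp_mul_div_eq_tricomiLog hz]

lemma differentiableOn_tricomiLog : DifferentiableOn ℂ tricomiLog (Metric.ball 0 1) := by
  intro z hz
  rw [mem_ball_zero_iff] at hz
  exact ((differentiableAt_id.const_mul 2).add
    ((differentiableAt_id.const_sub 1).clog (one_sub_mem_slitPlane_of_norm_lt_one hz))
    |>.sub ((differentiableAt_id.const_add 1).clog (mem_slitPlane_of_norm_lt_one hz)))
    |>.differentiableWithinAt

lemma differentiableOn_tricomiGen (a : ℂ) :
    DifferentiableOn ℂ (tricomiGen a) (Metric.closedBall 0 (1 / 2)) := by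
  have hsub : Metric.closedBall (0 : ℂ) (1 / 2) ⊆ Metric.ball 0 1 :=
    Metric.closedBall_subset_ball one_half_lt_one
  refine DifferentiableOn.congr ?_ fun z hz => tricomiGen_eq (mem_closedBall_zero_iff.mp hz)
  refine (differentiable_exp.differentiableOn.div (differentiableOn_id.const_add 1) ?_).mul
    ((differentiableOn_tricomiLog.mono hsub).const_mul (-a)).cexp
  intro z hz
  exact slitPlane_ne_zero (mem_slitPlane_of_norm_lt_one (mem_ball_zero_iff.mp (hsub hz)))

lemma norm_tricomiGen_le (a : ℂ) {z : ℂ} (hz : ‖z‖ ≤ 1 / 2) :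
    ‖tricomiGen a z‖ ≤ 2 * Real.exp (1 / 2 + 2 * (‖a‖ * ‖z‖ ^ 3)) := by
  have hden : 1 / 2 ≤ ‖1 + z‖ := by
    have := norm_sub_norm_le (1 : ℂ) (-z)
    rw [norm_one, norm_neg, sub_neg_eq_add] at this
    linarith
  have hnum : ‖exp z‖ ≤ Real.exp (1 / 2) := (norm_exp_le_exp_norm z).trans (Real.exp_le_exp.2 hz)
  have hpow : ‖exp (-a * tricomiLog z)‖ ≤ Real.exp (2 * (‖a‖ * ‖z‖ ^ 3)) := by
    refine (norm_exp_le_exp_norm _).trans (Real.exp_le_exp.2 ?_)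
    rw [norm_mul, norm_neg]
    exact (mul_le_mul_of_nonneg_left (norm_tricomiLog_le hz) (norm_nonneg a)).trans_eq (by ring)
  rw [tricomiGen_eq hz, norm_mul, norm_div, Real.exp_add]
  calc ‖exp z‖ / ‖1 + z‖ * ‖exp (-a * tricomiLog z)‖
      ≤ Real.exp (1 / 2) / (1 / 2) * Real.exp (2 * (‖a‖ * ‖z‖ ^ 3)) := by gcongr
    _ = _ := by ring

lemma norm_tricomiCoeff_le (m : ℕ) (a : ℂ) {R : ℝ} (hR : 0 < R) (hR' : R ≤ 1 / 2) :
    ‖tricomiCoeff m a‖ ≤ 2 * Real.exp (1 / 2 + 2 * (‖a‖ * R ^ 3)) / R ^ m := by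
  have hcauchy := norm_iteratedDeriv_le_of_forall_mem_sphere_norm_le m hR
    (C := 2 * Real.exp (1 / 2 + 2 * (‖a‖ * R ^ 3)))
    ((differentiableOn_tricomiGen a).diffContOnCl_ball (Metric.closedBall_subset_closedBall hR'))
    fun z hz => by
      rw [mem_sphere_zero_iff_norm] at hz
      rw [← hz]
      exact norm_tricomiGen_le a (hz.le.trans hR')
  rw [tricomiCoeff, norm_div, norm_natCast, div_le_iff₀ (by positivity)]
  exact hcauchy.trans_eq (by ring)

/-- There exist `C > 0` and `a₀ > 0` such that for every `a` with
`Re a ≤ -a₀` and `|Im a| ≤ 1` and every `m`, `|A_m(a)| ≤ C |a|^{(5/12) m}`. -/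
theorem tricomi_coefficient_bound :
    ∃ C > 0, ∃ a₀ > 0, ∀ a : ℂ, a.re ≤ -a₀ → |a.im| ≤ 1 → ∀ m : ℕ,
      ‖tricomiCoeff m a‖ ≤ C * ‖a‖ ^ ((5 : ℝ) / 12 * m) := by
  refine ⟨2 * Real.exp (5 / 2), by positivity, 2 ^ (12 / 5 : ℝ), by positivity,
    fun a ha _ m => ?_⟩
  have hA : 2 ^ (12 / 5 : ℝ) ≤ ‖a‖ := by linarith [neg_le_abs a.re, abs_re_le_norm a]
  have hA0 : 0 < ‖a‖ := lt_of_lt_of_le (by positivity) hA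
  set R := ‖a‖ ^ (-(5 / 12 : ℝ)) with hR
  have hR0 : 0 < R := by positivity
  have hRhalf : R ≤ 1 / 2 := by
    have h2 : 2 ≤ ‖a‖ ^ (5 / 12 : ℝ) := by
      calc (2 : ℝ) = (2 ^ (12 / 5 : ℝ)) ^ (5 / 12 : ℝ) := by
            rw [← Real.rpow_mul zero_le_two]; norm_num
        _ ≤ ‖a‖ ^ (5 / 12 : ℝ) := by gcongr
    rw [hR, Real.rpow_neg hA0.le, one_div]
    exact inv_anti₀ two_pos h2
  have hcube : ‖a‖ * R ^ 3 ≤ 1 := by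
    rw [hR, ← Real.rpow_natCast, ← Real.rpow_mul hA0.le, ← Real.rpow_one_add' hA0.le (by norm_num)]
    exact Real.rpow_le_one_of_one_le_of_nonpos
      ((Real.one_le_rpow one_le_two (by norm_num)).trans hA) (by norm_num)
  calc ‖tricomiCoeff m a‖ ≤ 2 * Real.exp (1 / 2 + 2 * (‖a‖ * R ^ 3)) / R ^ m :=
        norm_tricomiCoeff_le m a hR0 hRhalf
    _ ≤ 2 * Real.exp (5 / 2) / R ^ m := by gcongr; linarith
    _ = 2 * Real.exp (5 / 2) * ‖a‖ ^ ((5 : ℝ) / 12 * m) := by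
        rw [div_eq_mul_inv, hR, ← Real.rpow_natCast, ← Real.rpow_mul hA0.le,
          ← Real.rpow_neg hA0.le]
        ring_nf
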